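/- arXiv:2210.16685 — 2 statements merged into one kernel-verified Lean document; each statement's English description precedes it below -/
import Mathlib

section
/- Let γ > 0 and ν > 0, and for x > 0 define λ_{γ,ν}(x) = −ln[1 − I(x²/(x² + γ²ν); 1/2, ν/2)] / x, where I denotes the regularized incomplete beta function. Then λ_{γ,ν}(x) tends to λ₀ = 2/(γ·ν^{1/2}·B(1/2, ν/2)) as x → 0⁺, where B denotes the Beta function. -/
open MeasureTheory Set Filter

/-- The Beta function `B(a, b) = ∫_0^1 u^{a-1} (1-u)^{b-1} du`. -/
noncomputable def betaFn (a b : ℝ) : ℝ :=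
  ∫ u in Ioo (0:ℝ) 1, u ^ (a - 1) * (1 - u) ^ (b - 1)

/-- The regularized incomplete beta function `I(z; a, b)`. -/
noncomputable def regIncBeta (a b z : ℝ) : ℝ :=
  (∫ u in Ioo (0:ℝ) z, u ^ (a - 1) * (1 - u) ^ (b - 1)) / betaFn a b

/-! The substitution `u = s²` turns `I(z; 1/2, ν/2)` into
`(2/B) ∫₀^{√z} (1 - s²)^{ν/2-1} ds`, and `√z = x / √(x² + γ²ν)` is smooth in `x`. Hence
`x ↦ -log (1 - I)` is differentiable at `0`, where it vanishes, `λ_{γ,ν}(x)` is its difference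
quotient at `0`, and the chain rule gives the derivative `2 / (γ √ν B(1/2, ν/2))`. -/

open Real

lemma integral_Ioo_sq_rpow_half_sub_one_mul (g : ℝ → ℝ) {t : ℝ} (ht : 0 ≤ t) :
    ∫ u in Ioo 0 (t ^ 2), u ^ ((1:ℝ)/2 - 1) * g u = 2 * ∫ s in (0)..t, g (s ^ 2) := by
  have hmono : StrictMonoOn (fun s : ℝ => s ^ 2) (Icc 0 t) :=
    (pow_left_strictMonoOn₀ two_ne_zero).mono Icc_subset_Ici_self
  have himage : (fun s : ℝ => s ^ 2) '' Ioo 0 t = Ioo 0 (t ^ 2) := by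
    simpa using (continuous_pow 2).continuousOn.image_Ioo_of_strictMonoOn ht hmono
  rw [← himage, integral_image_eq_integral_abs_deriv_smul measurableSet_Ioo
    (fun s _ => (hasDerivAt_pow 2 s).hasDerivWithinAt)
    (hmono.injOn.mono Ioo_subset_Icc_self), intervalIntegral.integral_of_le ht,
    integral_Ioc_eq_integral_Ioo, ← integral_const_mul]
  refine setIntegral_congr_fun measurableSet_Ioo fun s hs => ?_
  have hs0 : 0 < s := hs.1
  have hpow : (s ^ 2) ^ ((1:ℝ)/2 - 1) = s⁻¹ := by
    rw [← rpow_natCast, ← rpow_mul hs0.le]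
    norm_num [rpow_neg_one]
  rw [hpow]
  simp only [Nat.cast_ofNat, Nat.add_one_sub_one, pow_one, smul_eq_mul,
    abs_of_pos (by positivity : (0:ℝ) < 2 * s)]
  field_simp

lemma hasDerivAt_integral_one_sub_sq_rpow (c : ℝ) :
    HasDerivAt (fun t => ∫ s in (0)..t, (1 - s ^ 2) ^ c) 1 0 := by
  have hcont : ContinuousOn (fun s : ℝ => (1 - s ^ 2) ^ c) (Ioo (-1) 1) :=
    (continuousOn_const.sub (continuousOn_pow 2)).rpow_const fun s hs =>
      Or.inl (by nlinarith [hs.1, hs.2] : (0:ℝ) < 1 - s ^ 2).ne'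
  have h0 : (0:ℝ) ∈ Ioo (-1) 1 := by norm_num
  simpa using intervalIntegral.integral_hasDerivAt_right IntervalIntegrable.refl
    (hcont.stronglyMeasurableAtFilter isOpen_Ioo 0 h0) (hcont.continuousAt (Ioo_mem_nhds h0.1 h0.2))

lemma hasDerivAt_div_sqrt_sq_add_sq {a : ℝ} (ha : 0 < a) :
    HasDerivAt (fun x => x / √(x ^ 2 + a ^ 2)) a⁻¹ 0 := by
  have hsqrt := ((hasDerivAt_pow 2 (0:ℝ)).add_const (a ^ 2)).sqrt (by positivity)
  refine ((hasDerivAt_id' (0:ℝ)).fun_div hsqrt (by positivity)).congr_deriv ?_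
  simp [sq, sqrt_mul_self ha.le]

/-- As `x → 0⁺`, the tail-matching rate `λ_{γ,ν}(x)` tends to
`λ₀ = 2/(γ·√ν·B(1/2, ν/2))`. -/
theorem lambda_tendsto_at_zero (γ ν : ℝ) (hγ : 0 < γ) (hν : 0 < ν) :
    Tendsto
      (fun x : ℝ =>
        - Real.log (1 - regIncBeta (1/2) (ν/2) (x^2 / (x^2 + γ^2 * ν))) / x)
      (nhdsWithin 0 (Ioi 0))
      (nhds (2 / (γ * ν ^ ((1:ℝ)/2) * betaFn (1/2) (ν/2)))) := by
  set a := γ * ν ^ ((1:ℝ)/2)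
  set B := betaFn (1/2) (ν/2)
  have ha : 0 < a := by positivity
  have hsq : γ ^ 2 * ν = a ^ 2 := by
    rw [mul_pow, ← rpow_natCast (ν ^ _), ← rpow_mul hν.le]
    norm_num
  set F := fun t => ∫ s in (0)..t, (1 - s ^ 2) ^ (ν/2 - 1)
  set Φ := fun x : ℝ => -log (1 - 2 * F (x / √(x ^ 2 + a ^ 2)) / B)
  have hΦ : HasDerivAt Φ (2 / (a * B)) 0 := by
    have hF : HasDerivAt F 1 (0 / √(0 ^ 2 + a ^ 2)) := by
      rw [zero_div]
      exact hasDerivAt_integral_one_sub_sq_rpow (ν/2 - 1)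
    have hG := ((hF.comp 0 (hasDerivAt_div_sqrt_sq_add_sq ha)).const_mul 2).div_const B
    refine ((hG.const_sub 1).log (by simp [F])).neg.congr_deriv ?_
    field_simp
    simp [F]
  have hΦ0 : Φ 0 = 0 := by simp [Φ, F]
  refine ((hasDerivAt_iff_tendsto_slope.mp hΦ).mono_left
    (nhdsWithin_mono _ fun x hx => ne_of_gt hx)).congr' ?_
  filter_upwards [self_mem_nhdsWithin] with x hx
  have hz : x ^ 2 / (x ^ 2 + a ^ 2) = (x / √(x ^ 2 + a ^ 2)) ^ 2 := by
    rw [div_pow, sq_sqrt (by positivity)]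
  rw [slope_def_field, hΦ0, hsq, regIncBeta, hz,
    integral_Ioo_sq_rpow_half_sub_one_mul _ (div_nonneg (le_of_lt hx) (sqrt_nonneg _)), sub_zero,
    sub_zero]
end

section
/- Let γ > 0 and ν > 0, and for x > 0 define λ_{γ,ν}(x) = −ln[1 − I(x²/(x² + γ²ν); 1/2, ν/2)] / x, where I denotes the regularized incomplete beta function. Then λ_{γ,ν}(x) tends to 0 as x → ∞. -/
open MeasureTheory Set Filter

/-!
With `z = x² / (x² + c)` and `c = γ²ν` we have `1 - z = c / (x² + c)`. For `a ≤ 1` the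
factor `u^(a-1)` is at least `1` on `(0, 1)`, so the upper tail `1 - I(z; a, b)` of the
incomplete beta function is at least `(1 - z)^b / (b B(a, b))`. Hence
`0 ≤ -log(1 - I(z)) ≤ const + b log(x² + c)`, which grows only logarithmically in `x`.
-/

section BetaIntegral

variable {a b : ℝ}

lemma integrableOn_betaIntegrand (ha : 0 < a) (hb : 0 < b) :
    IntegrableOn (fun u : ℝ => u ^ (a - 1) * (1 - u) ^ (b - 1)) (Ioc 0 1) := by
  have hC := (intervalIntegrable_iff_integrableOn_Ioc_of_le zero_le_one).mp
    (Complex.betaIntegral_convergent (u := a) (v := b) (by simpa) (by simpa))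
  refine IntegrableOn.congr_fun hC.re (fun u hu => ?_) measurableSet_Ioc
  have h1u : 0 ≤ 1 - u := sub_nonneg.mpr hu.2
  simp only [RCLike.re_to_complex]
  rw [show (a : ℂ) - 1 = ((a - 1 : ℝ) : ℂ) by push_cast; ring,
    show (b : ℂ) - 1 = ((b - 1 : ℝ) : ℂ) by push_cast; ring,
    show (1 : ℂ) - u = ((1 - u : ℝ) : ℂ) by push_cast; ring,
    ← Complex.ofReal_cpow hu.1.le, ← Complex.ofReal_cpow h1u,
    ← Complex.ofReal_mul, Complex.ofReal_re]

lemma betaIntegrand_pos {u : ℝ} (hu : u ∈ Ioo (0:ℝ) 1) :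
    0 < u ^ (a - 1) * (1 - u) ^ (b - 1) :=
  mul_pos (Real.rpow_pos_of_pos hu.1 _) (Real.rpow_pos_of_pos (sub_pos.mpr hu.2) _)

lemma setIntegral_betaIntegrand_Ioo_pos (ha : 0 < a) (hb : 0 < b) {x y : ℝ} (hx : 0 ≤ x)
    (hxy : x < y) (hy : y ≤ 1) : 0 < ∫ u in Ioo x y, u ^ (a - 1) * (1 - u) ^ (b - 1) := by
  have hsub : Ioo x y ⊆ Ioo 0 1 := Ioo_subset_Ioo hx hy
  rw [setIntegral_pos_iff_support_of_nonneg_ae]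
  · refine lt_of_lt_of_le ?_ (measure_mono fun u hu => ⟨(betaIntegrand_pos (hsub hu)).ne', hu⟩)
    simpa using hxy
  · exact (ae_restrict_iff' measurableSet_Ioo).mpr
      (.of_forall fun u hu => (betaIntegrand_pos (hsub hu)).le)
  · exact (integrableOn_betaIntegrand ha hb).mono_set (hsub.trans Ioo_subset_Ioc_self)

lemma betaFn_pos (ha : 0 < a) (hb : 0 < b) : 0 < betaFn a b :=
  setIntegral_betaIntegrand_Ioo_pos ha hb le_rfl zero_lt_one le_rfl

lemma regIncBeta_nonneg {z : ℝ} (hz : z ≤ 1) : 0 ≤ regIncBeta a b z := by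
  refine div_nonneg (setIntegral_nonneg measurableSet_Ioo fun u hu => ?_)
    (setIntegral_nonneg measurableSet_Ioo fun u hu => (betaIntegrand_pos hu).le)
  exact (betaIntegrand_pos ⟨hu.1, hu.2.trans_le hz⟩).le

lemma one_sub_regIncBeta (ha : 0 < a) (hb : 0 < b) {z : ℝ} (hz : z ∈ Ioo (0:ℝ) 1) :
    1 - regIncBeta a b z = (∫ u in Ioo z 1, u ^ (a - 1) * (1 - u) ^ (b - 1)) / betaFn a b := by
  have hI := (integrableOn_betaIntegrand ha hb).mono_set Ioo_subset_Ioc_self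
  have hsplit : Ioo 0 z ∪ Ico z 1 = Ioo (0:ℝ) 1 := Ioo_union_Ico_eq_Ioo hz.1 hz.2.le
  have hB : betaFn a b = (∫ u in Ioo 0 z, u ^ (a - 1) * (1 - u) ^ (b - 1)) +
      ∫ u in Ioo z 1, u ^ (a - 1) * (1 - u) ^ (b - 1) := by
    rw [betaFn, ← hsplit, setIntegral_union (Ico_disjoint_Ico_same.mono_left Ioo_subset_Ico_self)
      measurableSet_Ico (hI.mono_set (hsplit ▸ subset_union_left))
      (hI.mono_set (hsplit ▸ subset_union_right)), setIntegral_congr_set Ioo_ae_eq_Ico.symm]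
  rw [regIncBeta, eq_div_iff (betaFn_pos ha hb).ne', sub_mul, one_mul,
    div_mul_cancel₀ _ (betaFn_pos ha hb).ne', hB, add_sub_cancel_left]

lemma integral_one_sub_rpow_Ioo (hb : 0 < b) {z : ℝ} (hz : z ≤ 1) :
    ∫ u in Ioo z 1, (1 - u) ^ (b - 1) = (1 - z) ^ b / b := by
  rw [integral_Ioc_eq_integral_Ioo.symm, ← intervalIntegral.integral_of_le hz,
    intervalIntegral.integral_comp_sub_left (fun v => v ^ (b - 1)) 1, sub_self,
    integral_rpow (Or.inl (by linarith)), sub_add_cancel, Real.zero_rpow hb.ne', sub_zero]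

lemma div_le_one_sub_regIncBeta (ha : 0 < a) (ha1 : a ≤ 1) (hb : 0 < b) {z : ℝ}
    (hz : z ∈ Ioo (0:ℝ) 1) :
    (1 - z) ^ b / (b * betaFn a b) ≤ 1 - regIncBeta a b z := by
  rw [one_sub_regIncBeta ha hb hz, ← div_div, ← integral_one_sub_rpow_Ioo hb hz.2.le]
  refine div_le_div_of_nonneg_right (setIntegral_mono_on ?_ ?_ measurableSet_Ioo fun u hu => ?_)
    (betaFn_pos ha hb).le
  · refine (intervalIntegrable_iff_integrableOn_Ioo_of_le hz.2.le).mp ?_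
    simpa using ((intervalIntegral.intervalIntegrable_rpow' (a := 0) (b := 1 - z)
      (by linarith : -1 < b - 1)).comp_sub_left 1).symm
  · exact (integrableOn_betaIntegrand ha hb).mono_set fun u hu => ⟨hz.1.trans hu.1, hu.2.le⟩
  · have hu1 : 1 ≤ u ^ (a - 1) :=
      Real.one_le_rpow_of_pos_of_le_one_of_nonpos (hz.1.trans hu.1) hu.2.le (by linarith)
    exact le_mul_of_one_le_left (Real.rpow_nonneg (sub_nonneg.mpr hu.2.le) _) hu1

lemma neg_log_one_sub_regIncBeta_nonneg (ha : 0 < a) (hb : 0 < b) {z : ℝ}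
    (hz : z ∈ Ioo (0:ℝ) 1) : 0 ≤ -Real.log (1 - regIncBeta a b z) := by
  have hpos : 0 < 1 - regIncBeta a b z := by
    rw [one_sub_regIncBeta ha hb hz]
    exact div_pos (setIntegral_betaIntegrand_Ioo_pos ha hb hz.1.le hz.2 le_rfl) (betaFn_pos ha hb)
  have hle : 1 - regIncBeta a b z ≤ 1 := sub_le_self _ (regIncBeta_nonneg hz.2.le)
  exact neg_nonneg.mpr (Real.log_nonpos hpos.le hle)

lemma neg_log_one_sub_regIncBeta_le (ha : 0 < a) (ha1 : a ≤ 1) (hb : 0 < b) {z : ℝ}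
    (hz : z ∈ Ioo (0:ℝ) 1) :
    -Real.log (1 - regIncBeta a b z) ≤ Real.log (b * betaFn a b) - b * Real.log (1 - z) := by
  have h1z : 0 < 1 - z := sub_pos.mpr hz.2
  have hbB : 0 < b * betaFn a b := mul_pos hb (betaFn_pos ha hb)
  have hle := Real.log_le_log (by positivity) (div_le_one_sub_regIncBeta ha ha1 hb hz)
  rw [Real.log_div (by positivity) hbB.ne', Real.log_rpow h1z] at hle
  linarith

end BetaIntegral

lemma tendsto_log_sq_add_div_atTop {c : ℝ} (hc : 0 < c) :
    Tendsto (fun x : ℝ => Real.log (x ^ 2 + c) / x) atTop (nhds 0) := by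
  have hsplit : ∀ x : ℝ, 0 < x →
      Real.log (x ^ 2 + c) / x = 2 * (Real.log x / x) + Real.log (1 + c / x ^ 2) / x := by
    intro x hx
    rw [show x ^ 2 + c = x ^ 2 * (1 + c / x ^ 2) by field_simp,
      Real.log_mul (by positivity) (by positivity), Real.log_pow]
    push_cast
    ring
  have hrem : Tendsto (fun x : ℝ => Real.log (1 + c / x ^ 2)) atTop (nhds 0) := by
    have h : Tendsto (fun x : ℝ => 1 + c / x ^ 2) atTop (nhds 1) := by
      simpa using tendsto_const_nhds.add
        (tendsto_const_nhds.div_atTop (tendsto_pow_atTop (α := ℝ) two_ne_zero))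
    simpa using h.log one_ne_zero
  have := (Real.isLittleO_log_id_atTop.tendsto_div_nhds_zero.const_mul 2).add
    (hrem.div_atTop tendsto_id)
  rw [mul_zero, add_zero] at this
  exact this.congr' ((eventually_gt_atTop 0).mono fun x hx => (hsplit x hx).symm)

/-- As `x → ∞`, the tail-matching rate `λ_{γ,ν}(x)` tends to `0`. -/
theorem lambda_tendsto_at_top (γ ν : ℝ) (hγ : 0 < γ) (hν : 0 < ν) :
    Tendsto
      (fun x : ℝ =>
        - Real.log (1 - regIncBeta (1/2) (ν/2) (x^2 / (x^2 + γ^2 * ν))) / x)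
      atTop (nhds 0) := by
  set c := γ ^ 2 * ν
  have hb : 0 < ν / 2 := by positivity
  have hc : 0 < c := by positivity
  have hz : ∀ x : ℝ, 0 < x → x ^ 2 / (x ^ 2 + c) ∈ Ioo (0:ℝ) 1 := fun x hx =>
    ⟨by positivity, (div_lt_one (by positivity)).mpr (by linarith)⟩
  set C := Real.log (ν / 2 * betaFn (1/2) (ν/2)) - ν / 2 * Real.log c with hC
  have hupper :
      Tendsto (fun x : ℝ => C / x + ν / 2 * (Real.log (x ^ 2 + c) / x)) atTop (nhds 0) := by
    simpa using (tendsto_const_nhds.div_atTop tendsto_id).add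
      ((tendsto_log_sq_add_div_atTop hc).const_mul (ν / 2))
  refine tendsto_of_tendsto_of_tendsto_of_le_of_le' tendsto_const_nhds hupper ?_ ?_
  · filter_upwards [eventually_gt_atTop 0] with x hx
    exact div_nonneg (neg_log_one_sub_regIncBeta_nonneg one_half_pos hb (hz x hx)) hx.le
  · filter_upwards [eventually_gt_atTop 0] with x hx
    have h1z : 1 - x ^ 2 / (x ^ 2 + c) = c / (x ^ 2 + c) := by field_simp; ring
    have hle := neg_log_one_sub_regIncBeta_le one_half_pos (by norm_num) hb (hz x hx)
    rw [h1z, Real.log_div hc.ne' (by positivity)] at hle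
    rw [mul_div_assoc', ← add_div, div_le_div_iff_of_pos_right hx]
    linarith
end
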